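/- arXiv:2206.01179 — 3 statements merged into one kernel-verified Lean document; each statement's English description precedes it below -/
import Mathlib

section
/- Let a > 3 be a composite natural number, let p_1 < … < p_n be the primes ≤ a (so n = π(a) ≥ 2), and let c_1 = Σ_{i=1}^{n} ∏_{k ≠ i} p_k. Then gcd(2a, c_1) = 1. -/
theorem stmt_7 (a : ℕ) (ha : 3 < a) (hcomp : ¬ a.Prime) :
    Nat.gcd (2 * a)
      (∑ p ∈ (Finset.range (a + 1)).filter Nat.Prime,
        ∏ q ∈ ((Finset.range (a + 1)).filter Nat.Prime).erase p, q) = 1 := by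
  set S := (Finset.range (a + 1)).filter Nat.Prime with hS
  set c := ∑ p ∈ S, ∏ q ∈ S.erase p, q with hc
  by_contra hg
  obtain ⟨q, hq, hqg⟩ := Nat.exists_prime_and_dvd hg
  have hq2a : q ∣ 2 * a := hqg.trans (Nat.gcd_dvd_left _ _)
  have hqc : q ∣ c := hqg.trans (Nat.gcd_dvd_right _ _)
  have hqa : q ≤ a := by
    rcases (Nat.Prime.dvd_mul hq).mp hq2a with h2 | ha'
    · have : q = 2 := (Nat.prime_dvd_prime_iff_eq hq Nat.prime_two).mp h2
      omega
    · exact Nat.le_of_dvd (by omega) ha'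
  have hqS : q ∈ S := by
    simp [hS, Finset.mem_filter, Nat.lt_succ_iff, hq, hqa]
  -- split the sum at q
  have hsplit : c = (∏ r ∈ S.erase q, r) + ∑ p ∈ S.erase q, ∏ r ∈ S.erase p, r := by
    rw [hc, ← Finset.add_sum_erase _ _ hqS]
  have hdvd_rest : q ∣ ∑ p ∈ S.erase q, ∏ r ∈ S.erase p, r := by
    apply Finset.dvd_sum
    intro p hp
    apply Finset.dvd_prod_of_mem
    exact Finset.mem_erase.mpr ⟨Ne.symm (Finset.mem_erase.mp hp).1, hqS⟩
  have hdvd_prod : q ∣ ∏ r ∈ S.erase q, r := by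
    have := hqc
    rw [hsplit] at this
    exact (Nat.dvd_add_right hdvd_rest).mp (by rwa [Nat.add_comm] at this)
  obtain ⟨r, hr, hqr⟩ := hq.prime.exists_mem_finset_dvd hdvd_prod
  have hrprime : r.Prime := (Finset.mem_filter.mp (Finset.mem_of_mem_erase hr)).2
  have : q = r := (Nat.prime_dvd_prime_iff_eq hq hrprime).mp hqr
  exact (Finset.mem_erase.mp hr).1 this.symm
end

section
/- Let a > 3 be a natural number. If 2a cannot be written as q − p with q, p prime and p ≤ a, then for every prime p ≤ a, every prime factor of 2a + p is at most a + 1; moreover a prime factor equal to a + 1 can occur only for p = 2 (i.e., only 2a + 2 can be divisible by a prime exceeding a, and that prime must be a + 1). -/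
theorem stmt_14 (a : ℕ) (ha : 3 < a)
    (h : ¬ ∃ p q : ℕ, p.Prime ∧ q.Prime ∧ p ≤ a ∧ q = 2 * a + p) :
    ∀ p : ℕ, p.Prime → p ≤ a →
      ∀ f : ℕ, f.Prime → f ∣ (2 * a + p) → f ≤ a + 1 ∧ (f = a + 1 → p = 2) := by
  intro p hp hpa f hf hfd
  by_cases hfa : f ≤ a
  · exact ⟨Nat.le_succ_of_le hfa, fun he => by omega⟩
  push_neg at hfa
  rcases eq_or_ne p 2 with hp2 | hp2
  · subst hp2
    have h2 : (2 * a + 2) = 2 * (a + 1) := by ring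
    rw [h2] at hfd
    have hfodd : f ≠ 2 := by omega
    have hdvd : f ∣ a + 1 :=
      (Nat.Coprime.dvd_of_dvd_mul_left
        ((Nat.coprime_primes hf Nat.prime_two).mpr hfodd) hfd)
    exact ⟨Nat.le_of_dvd (by omega) hdvd, fun _ => rfl⟩
  · exfalso
    have hpodd := hp.odd_of_ne_two hp2
    have hq : ¬ (2 * a + p).Prime := fun hq => h ⟨p, 2 * a + p, hp, hq, hpa, rfl⟩
    obtain ⟨m, hm⟩ := hfd
    have hqodd : Odd (2 * a + p) := by
      rcases hpodd with ⟨k, hk⟩; exact ⟨a + k, by omega⟩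
    have hm1 : m ≠ 1 := by rintro rfl; exact hq (by simpa [hm] using hf)
    have hmodd : Odd m := by
      rcases Nat.even_or_odd m with he | ho
      · rw [hm] at hqodd
        exact absurd (he.mul_left f) (Nat.not_even_iff_odd.mpr hqodd)
      · exact ho
    have hm3 : 3 ≤ m := by rcases hmodd with ⟨k, hk⟩; omega
    have hge : 2 * a + p ≥ f * 3 := by
      calc 2 * a + p = f * m := hm
        _ ≥ f * 3 := Nat.mul_le_mul_left f hm3
    omega
end

section
/- Let a > 3 be a natural number such that 2a is not expressible as a difference q − p of two primes with p ≤ a. Then there exist natural number exponents α_p and β ∈ {0, 1}, with β = 1 only if a + 1 is prime, such that ∏_{p prime, p ≤ a} (2a + p) = (a + 1)^β · ∏_{p prime, p ≤ a} p^{α_p}. -/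
theorem stmt_15 (a : ℕ) (ha : 3 < a)
    (h : ¬ ∃ p q : ℕ, p.Prime ∧ q.Prime ∧ p ≤ a ∧ q = 2 * a + p) :
    ∃ (α : ℕ → ℕ) (β : ℕ), β ≤ 1 ∧ (β = 1 → (a + 1).Prime) ∧
      ∏ p ∈ (Finset.range (a + 1)).filter Nat.Prime, (2 * a + p) =
      (a + 1) ^ β * ∏ p ∈ (Finset.range (a + 1)).filter Nat.Prime, p ^ α p := by
  set S := (Finset.range (a + 1)).filter Nat.Prime with hS
  set N := ∏ p ∈ S, (2 * a + p) with hN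
  have hmemS : ∀ p, p ∈ S ↔ p ≤ a ∧ p.Prime := by
    intro p
    rw [hS, Finset.mem_filter, Finset.mem_range]
    constructor <;> rintro ⟨h1, h2⟩ <;> exact ⟨by omega, h2⟩
  have hNpos : 0 < N := Finset.prod_pos (fun p hp => by omega)
  -- every prime factor of N is ≤ a+1
  have hkey : ∀ q : ℕ, q.Prime → q ∣ N → q ≤ a + 1 := by
    intro q hq hqN
    obtain ⟨p, hpS, hqp⟩ := hq.prime.exists_mem_finset_dvd hqN
    obtain ⟨hpa, hp⟩ := (hmemS p).mp hpS
    obtain ⟨m, hm⟩ := hqp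
    by_contra hgt
    push_neg at hgt
    have hp2 := hp.two_le
    have hmc : m = 0 ∨ m = 1 ∨ m = 2 ∨ 3 ≤ m := by omega
    rcases hmc with h0 | h1 | h2 | h3
    · subst h0; omega
    · subst h1
      rw [mul_one] at hm
      exact h ⟨p, q, hp, hq, hpa, hm.symm⟩
    · subst h2
      have h2p : 2 ∣ p := by omega
      rcases hp.eq_one_or_self_of_dvd 2 h2p with h21 | h22
      · omega
      · omega
    · have hmul : q * 3 ≤ q * m := Nat.mul_le_mul (Nat.le_refl q) h3
      omega
  -- a+1 divides 2a+p only when p = 2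
  have hdvd2 : ∀ p : ℕ, p.Prime → p ≤ a → (a + 1) ∣ (2 * a + p) → p = 2 := by
    intro p hp hpa hd
    have hp2 := hp.two_le
    have hd2 : (a + 1) ∣ (2 * a + p) - (a + 1) * 2 := Nat.dvd_sub hd ⟨2, rfl⟩
    have heq : (2 * a + p) - (a + 1) * 2 = p - 2 := by omega
    rw [heq] at hd2
    have : p - 2 = 0 := by
      by_contra hne
      have := Nat.le_of_dvd (Nat.pos_of_ne_zero hne) hd2
      omega
    omega
  have hne0 : ∀ p ∈ S, 2 * a + p ≠ 0 := fun p _ => by omega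
  -- β ≤ 1
  have hβ : N.factorization (a + 1) ≤ 1 := by
    by_cases hp1 : (a + 1).Prime
    · rw [hN, Nat.factorization_prod hne0]
      rw [Finset.sum_apply']
      have h2S : 2 ∈ S := (hmemS 2).mpr ⟨by omega, Nat.prime_two⟩
      rw [Finset.sum_eq_single_of_mem 2 h2S ?_]
      · have he : 2 * a + 2 = 2 * (a + 1) := by ring
        rw [he, Nat.factorization_mul (by omega) (by omega)]
        have hnd : ¬ (a + 1) ∣ 2 := by
          intro hd
          have := Nat.le_of_dvd (by omega) hd
          omega
        simp [Nat.Prime.factorization_self hp1, Nat.factorization_eq_zero_of_not_dvd hnd]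
      · intro p hpS hp2
        obtain ⟨hpa, hp⟩ := (hmemS p).mp hpS
        apply Nat.factorization_eq_zero_of_not_dvd
        intro hd
        exact hp2 (hdvd2 p hp hpa hd)
    · simp [Nat.factorization_eq_zero_of_not_prime _ hp1]
  refine ⟨N.factorization, N.factorization (a + 1), hβ, ?_, ?_⟩
  · intro hb1
    by_contra hp1
    rw [Nat.factorization_eq_zero_of_not_prime _ hp1] at hb1
    omega
  · have hT : a + 1 ∉ S := by simp [hS]
    have hsup : N.primeFactors ⊆ insert (a + 1) S := by
      intro q hq
      rw [Nat.mem_primeFactors] at hq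
      obtain ⟨hqp, hqN, -⟩ := hq
      have hle := hkey q hqp hqN
      rcases eq_or_lt_of_le hle with h1 | h2
      · exact Finset.mem_insert.mpr (Or.inl h1)
      · exact Finset.mem_insert.mpr (Or.inr ((hmemS q).mpr ⟨by omega, hqp⟩))
    have h1 : ∏ q ∈ N.primeFactors, q ^ N.factorization q = N := by
      rw [← Nat.support_factorization]
      exact Nat.factorization_prod_pow_eq_self hNpos.ne'
    have h2 : ∏ q ∈ insert (a + 1) S, q ^ N.factorization q =
        ∏ q ∈ N.primeFactors, q ^ N.factorization q := by
      symm
      apply Finset.prod_subset hsup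
      intro q _ hq'
      have hz : N.factorization q = 0 := by
        rw [← Nat.support_factorization] at hq'
        exact Finsupp.notMem_support_iff.mp hq'
      simp [hz]
    rw [← Finset.prod_insert (f := fun q => q ^ N.factorization q) hT, h2, h1]
end
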